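/- Having equal dependency graphs does not imply stable isomorphism of composed systems: for f^1(x)=(1+x_2x_3, x_2, x_3), f^2(x)=(x_1, x_1, x_3), f^3(x)=(x_1, x_2, 1+x_1) and g^1(x)=(x_1+x_2+x_3, x_2, x_3), g^2(x)=(x_1, 1+x_1+x_2, x_3), g^3(x)=(x_1, x_2, x_1+x_3) on F_2^3, one has Φ(f) = Φ(g) (the graph on {1,2,3} with single edge (2,3)), yet the maps F = f^3∘f^2∘f^1 and G = g^3∘g^2∘g^1 have non-isomorphic periodic parts: the sets of periodic points (points lying on a cycle of the iteration) of F and G, with the induced permutations, are not isomorphic as permutations (e.g., they have different cycle type). -/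

import Mathlib

/-- `h` does not depend on the `j`-th variable. -/
def NotDep {n : ℕ} (h : (Fin n → ZMod 2) → ZMod 2) (j : Fin n) : Prop :=
  ∀ x x' : Fin n → ZMod 2, (∀ k, k ≠ j → x k = x' k) → h x = h x'

/-- The dependency graph `Φ(F)` of a system `F` of local functions. -/
def Phi {n : ℕ} (F : Fin n → ((Fin n → ZMod 2) → (Fin n → ZMod 2))) :
    SimpleGraph (Fin n) where
  Adj i j := i ≠ j ∧ NotDep (fun x => F i x i) j ∧ NotDep (fun x => F j x j) i
  symm := ⟨by intro i j h; exact ⟨h.1.symm, h.2.2, h.2.1⟩⟩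
  loopless := ⟨by intro i h; exact h.1 rfl⟩

/-- `f¹(x) = (1 + x₂x₃, x₂, x₃)`, `f²(x) = (x₁, x₁, x₃)`, `f³(x) = (x₁, x₂, 1 + x₁)`. -/
def exF : Fin 3 → ((Fin 3 → ZMod 2) → (Fin 3 → ZMod 2)) :=
  ![fun x => ![1 + x 1 * x 2, x 1, x 2],
    fun x => ![x 0, x 0, x 2],
    fun x => ![x 0, x 1, 1 + x 0]]

/-- `g¹(x) = (x₁+x₂+x₃, x₂, x₃)`, `g²(x) = (x₁, 1+x₁+x₂, x₃)`, `g³(x) = (x₁, x₂, x₁+x₃)`. -/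
def exG : Fin 3 → ((Fin 3 → ZMod 2) → (Fin 3 → ZMod 2)) :=
  ![fun x => ![x 0 + x 1 + x 2, x 1, x 2],
    fun x => ![x 0, 1 + x 0 + x 1, x 2],
    fun x => ![x 0, x 1, x 0 + x 2]]

/-- The set of periodic points of a map. -/
def PerPts (F : (Fin 3 → ZMod 2) → (Fin 3 → ZMod 2)) : Set (Fin 3 → ZMod 2) :=
  {a | ∃ k : ℕ, 1 ≤ k ∧ F^[k] a = a}


instance notDepDec {n : ℕ} (h : (Fin n → ZMod 2) → ZMod 2) (j : Fin n) :
    Decidable (NotDep h j) :=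
  inferInstanceAs (Decidable (∀ x x' : Fin n → ZMod 2, (∀ k, k ≠ j → x k = x' k) → h x = h x'))

instance phiAdjDec {n : ℕ} (F : Fin n → ((Fin n → ZMod 2) → (Fin n → ZMod 2))) (i j : Fin n) :
    Decidable ((Phi F).Adj i j) :=
  inferInstanceAs (Decidable (i ≠ j ∧ NotDep (fun x => F i x i) j ∧ NotDep (fun x => F j x j) i))

/-- Equal dependency graphs do not imply stable isomorphism: `Φ(f) = Φ(g)` is the graph
on `{1,2,3}` with single edge `(2,3)`, yet the composed maps `F = f³∘f²∘f¹` and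
`G = g³∘g²∘g¹` have non-isomorphic periodic parts: there is no bijection between their
sets of periodic points commuting with the maps. -/
theorem stmt_19 :
    Phi exF = Phi exG ∧
    (∀ i j : Fin 3, (Phi exF).Adj i j ↔
      ((i = 1 ∧ j = 2) ∨ (i = 2 ∧ j = 1))) ∧
    ¬ ∃ φ : (Fin 3 → ZMod 2) → (Fin 3 → ZMod 2),
        Set.BijOn φ (PerPts (exF 2 ∘ exF 1 ∘ exF 0)) (PerPts (exG 2 ∘ exG 1 ∘ exG 0)) ∧
        ∀ a ∈ PerPts (exF 2 ∘ exF 1 ∘ exF 0),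
          φ ((exF 2 ∘ exF 1 ∘ exF 0) a) = (exG 2 ∘ exG 1 ∘ exG 0) (φ a) := by
  refine ⟨?_, ?_, ?_⟩
  · ext i j
    revert i j
    show ∀ i j : Fin 3, (Phi exF).Adj i j ↔ (Phi exG).Adj i j
    decide
  · decide
  · rintro ⟨φ, hbij, -⟩
    set F := exF 2 ∘ exF 1 ∘ exF 0 with hF
    set G := exG 2 ∘ exG 1 ∘ exG 0 with hG
    have hc : F ![1,1,0] = ![1,1,0] := by decide
    have h2 : ∀ a, F (F a) = ![1,1,0] := by decide
    have hper : ∀ a ∈ PerPts F, a = ![1,1,0] := by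
      rintro a ⟨k, hk, hfix⟩
      obtain ⟨j, rfl⟩ : ∃ j, k = j + 1 := ⟨k - 1, by omega⟩
      have h2' : ∀ b, F^[2] b = ![1,1,0] := by
        intro b
        rw [Function.iterate_succ_apply', Function.iterate_one]
        exact h2 b
      have e1 : F^[2 * (j + 1)] a = a := by
        rw [mul_comm, Function.iterate_mul]
        exact Function.iterate_fixed hfix 2
      have e2 : F^[2 * (j + 1)] a = ![1,1,0] := by
        have : 2 * (j + 1) = 2 * j + 2 := by ring
        rw [this, Function.iterate_add_apply, h2' a]
        exact Function.iterate_fixed hc (2 * j)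
      rw [e1] at e2
      exact e2
    have hg0 : (![0,0,0] : Fin 3 → ZMod 2) ∈ PerPts G := ⟨4, by norm_num, by decide⟩
    have hg1 : (![0,1,0] : Fin 3 → ZMod 2) ∈ PerPts G := ⟨4, by norm_num, by decide⟩
    obtain ⟨a0, ha0, hφ0⟩ := hbij.surjOn hg0
    obtain ⟨a1, ha1, hφ1⟩ := hbij.surjOn hg1
    rw [hper a0 ha0] at hφ0
    rw [hper a1 ha1] at hφ1
    rw [hφ0] at hφ1
    exact absurd hφ1 (by decide)
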